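/- Let H be a finite-dimensional complex Hilbert space, let k be an integer with 4 ≤ 2k ≤ dim H and k = dim H − 3, and let X, Y be k-dimensional subspaces of H whose distance in the ortho-Grassmann graph Γ⊥_k(H) equals 2. Then X and Y are adjacent and non-compatible if and only if there are infinitely many k-dimensional subspaces Z of H ortho-adjacent to both X and Y and such that there is precisely one k-dimensional subspace Z' of H ortho-adjacent to each of X, Y and Z. -/

import Mathlib

noncomputable section

open scoped Classical

variable {H : Type*} [NormedAddCommGroup H] [InnerProductSpace ℂ H] [CompleteSpace H]

/-- The orthogonal projection onto `X`, as an operator `H → H` (junk value `0` if the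
orthogonal projection onto `X` does not exist; it always exists for finite-dimensional,
and more generally complete, subspaces). -/
noncomputable def projOn (X : Submodule ℂ H) : H →L[ℂ] H :=
  if h : X.HasOrthogonalProjection then
    haveI := h
    X.subtypeL.comp X.orthogonalProjectionOnto
  else 0

/-- Two subspaces of `H` are compatible if their orthogonal projections commute. -/
def Compatible (X Y : Submodule ℂ H) : Prop :=
  projOn X * projOn Y = projOn Y * projOn X

/-- `X` is a `k`-dimensional subspace of `H`. -/
def IsDim (k : ℕ) (X : Submodule ℂ H) : Prop :=
  FiniteDimensional ℂ X ∧ Module.finrank ℂ X = k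

/-- Two (distinct) `k`-dimensional subspaces are adjacent if their intersection is
`(k-1)`-dimensional. -/
def AdjacentSub (k : ℕ) (X Y : Submodule ℂ H) : Prop :=
  X ≠ Y ∧ Module.finrank ℂ ↥(X ⊓ Y) = k - 1

/-- Ortho-adjacency: adjacent and compatible. -/
def OrthoAdjacent (k : ℕ) (X Y : Submodule ℂ H) : Prop :=
  AdjacentSub k X Y ∧ Compatible X Y

/-- The ortho-Grassmann graph `Γ⊥_k(H)` on the `k`-dimensional subspaces of `H`:
two `k`-dimensional subspaces are connected by an edge if they are ortho-adjacent. -/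
def orthoGrassmannGraph (H : Type*) [NormedAddCommGroup H] [InnerProductSpace ℂ H]
    [CompleteSpace H] (k : ℕ) : SimpleGraph {X : Submodule ℂ H // IsDim k X} where
  Adj X Y := OrthoAdjacent k X.1 Y.1
  symm := by
    constructor
    rintro X Y ⟨⟨hne, hdim⟩, hc⟩
    refine ⟨⟨hne.symm, by rwa [inf_comm]⟩, ?_⟩
    unfold Compatible at hc ⊢
    exact hc.symm
  loopless := ⟨fun X h => h.1.1 rfl⟩

/-- The Grassmann graph `Γ_k(H)` on the `k`-dimensional subspaces of `H`:
two `k`-dimensional subspaces are connected by an edge if they are adjacent. -/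
def grassmannGraph (H : Type*) [NormedAddCommGroup H] [InnerProductSpace ℂ H]
    [CompleteSpace H] (k : ℕ) : SimpleGraph {X : Submodule ℂ H // IsDim k X} where
  Adj X Y := AdjacentSub k X.1 Y.1
  symm := by
    constructor
    rintro X Y ⟨hne, hdim⟩
    exact ⟨hne.symm, by rwa [inf_comm]⟩
  loopless := ⟨fun X h => h.1 rfl⟩

/-!
Write `L = X ⊓ Y`. If `X` and `Y` are adjacent, `(X ⊔ Y)ᗮ` is a plane. For each line `N` in it,
`L ⊔ N` is ortho-adjacent to `X` and `Y`, and `L ⊔ (Nᗮ ⊓ (X ⊔ Y)ᗮ)` is the only subspace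
ortho-adjacent to `X`, `Y` and `L ⊔ N`: such a subspace `Z'` is compatible with `L` and with
`L ⊔ N`, hence with `N`, and this forces `L ≤ Z'`. The plane contains infinitely many lines.

Otherwise `X` and `Y`, being at distance `2`, are not adjacent, and any common ortho-neighbour
forces `dim L = k - 2`. For common ortho-neighbours `Z ≠ Z'` with `Z'` ortho-adjacent to `Z`,
one of `Z ⊓ X = Z' ⊓ X`, `Z ⊓ Y = Z' ⊓ Y` holds, say the first. Then `Z ⊓ Xᗮ` and `Z' ⊓ Xᗮ` are
two lines spanning `Lᗮ ⊓ Y`, so `Lᗮ ⊓ Y` is orthogonal to `X`, and replacing `Z ⊓ X` in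
`Z = (Z ⊓ X) ⊔ (Z ⊓ Xᗮ)` by `L ⊔ ((Z ⊓ X)ᗮ ⊓ X)` gives a second subspace ortho-adjacent to `X`,
`Y` and `Z`.

Compatibility of `V` and `W` is used in the form: `W` is invariant under the orthogonal
projection onto `V`.
-/

open Module Submodule

section

variable {E : Type*} [NormedAddCommGroup E] [InnerProductSpace ℂ E] {k : ℕ}
  {V W A B M : Submodule ℂ E}

theorem projOn_eq_starProjection (V : Submodule ℂ E) [V.HasOrthogonalProjection] :
    projOn V = V.starProjection :=
  dif_pos ‹_›

theorem Compatible.symm (h : Compatible V W) : Compatible W V :=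
  Eq.symm h

theorem AdjacentSub.symm (h : AdjacentSub k W V) : AdjacentSub k V W :=
  ⟨h.1.symm, by rw [inf_comm]; exact h.2⟩

theorem mem_orthogonal_of_starProjection_mem (V : Submodule ℂ E) [V.HasOrthogonalProjection]
    {K : Submodule ℂ E} {x : E} (hx : x ∈ Kᗮ) (h : V.starProjection x ∈ K) : x ∈ Vᗮ := by
  rw [← starProjection_apply_eq_zero_iff, ← inner_self_eq_zero (𝕜 := ℂ),
    inner_starProjection_left_eq_right, starProjection_eq_self_iff.2 (V.starProjection_apply_mem x)]
  exact (mem_orthogonal' K x).1 hx _ h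

theorem compatible_iff_starProjection_mem [V.HasOrthogonalProjection]
    [W.HasOrthogonalProjection] : Compatible V W ↔ ∀ w ∈ W, V.starProjection w ∈ W := by
  rw [Compatible, projOn_eq_starProjection, projOn_eq_starProjection]
  constructor
  · intro h w hw
    have := congr($h w)
    rw [mul_apply_eq_comp, mul_apply_eq_comp, starProjection_eq_self_iff.2 hw] at this
    rw [this]
    exact W.starProjection_apply_mem _
  · intro h
    -- `Wᗮ` is invariant as well, since `V.starProjection` is self-adjoint
    have hperp : ∀ x ∈ Wᗮ, V.starProjection x ∈ Wᗮ := fun x hx =>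
      (mem_orthogonal W _).2 fun w hw => by
        rw [← inner_starProjection_left_eq_right]
        exact (mem_orthogonal W x).1 hx _ (h w hw)
    ext x
    have hx : x = W.starProjection x + (x - W.starProjection x) := by abel
    conv_rhs => rw [hx]
    rw [mul_apply_eq_comp, mul_apply_eq_comp, map_add, map_add,
      starProjection_eq_self_iff.2 (h _ (W.starProjection_apply_mem x)),
      (starProjection_apply_eq_zero_iff W).2 (hperp _ (W.sub_starProjection_mem_orthogonal x)),
      add_zero]

theorem Compatible.inf [V.HasOrthogonalProjection] [A.HasOrthogonalProjection]
    [B.HasOrthogonalProjection] [(A ⊓ B).HasOrthogonalProjection]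
    (hA : Compatible V A) (hB : Compatible V B) : Compatible V (A ⊓ B) := by
  rw [compatible_iff_starProjection_mem] at hA hB ⊢
  exact fun x hx => ⟨hA x hx.1, hB x hx.2⟩

theorem Compatible.orthogonal_right [V.HasOrthogonalProjection] [A.HasOrthogonalProjection]
    (h : Compatible V A) : Compatible V Aᗮ := by
  rw [compatible_iff_starProjection_mem] at h ⊢
  intro x hx
  refine (mem_orthogonal A _).2 fun a ha => ?_
  rw [← inner_starProjection_left_eq_right]
  exact (mem_orthogonal A x).1 hx _ (h a ha)

theorem compatible_sup_of_le_of_le_orthogonal [V.HasOrthogonalProjection]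
    [(A ⊔ M).HasOrthogonalProjection] (hA : A ≤ V) (hM : M ≤ Vᗮ) : Compatible V (A ⊔ M) := by
  rw [compatible_iff_starProjection_mem]
  intro x hx
  obtain ⟨a, ha, m, hm, rfl⟩ := mem_sup.1 hx
  rw [map_add, starProjection_eq_self_iff.2 (hA ha), (starProjection_apply_eq_zero_iff V).2 (hM hm),
    add_zero]
  exact mem_sup_left ha

theorem Compatible.inf_orthogonal_inf [V.HasOrthogonalProjection] [W.HasOrthogonalProjection]
    (h : Compatible V W) : W ⊓ (W ⊓ V)ᗮ = W ⊓ Vᗮ := by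
  refine le_antisymm (fun w hw => ⟨hw.1, ?_⟩) (inf_le_inf_left W (orthogonal_le inf_le_right))
  have hmem := (compatible_iff_starProjection_mem.1 h) w hw.1
  exact mem_orthogonal_of_starProjection_mem V hw.2 ⟨hmem, V.starProjection_apply_mem w⟩

end

theorem sup_inf_eq_of_le_of_le_orthogonal {𝕜 E : Type*} [RCLike 𝕜] [NormedAddCommGroup E]
    [InnerProductSpace 𝕜 E] {A M V : Submodule 𝕜 E} (hA : A ≤ V) (hM : M ≤ Vᗮ) :
    (A ⊔ M) ⊓ V = A := by
  rw [sup_inf_assoc_of_le M hA, disjoint_iff.1 ((orthogonal_disjoint V).symm.mono_left hM),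
    sup_bot_eq]

theorem finrank_inf_lt_of_ne {K V : Type*} [DivisionRing K] [AddCommGroup V] [Module K V]
    {A B : Submodule K V} [FiniteDimensional K A] [FiniteDimensional K B]
    (h : finrank K A = finrank K B) (hne : A ≠ B) : finrank K ↥(A ⊓ B) < finrank K A :=
  finrank_lt_finrank_of_lt <| inf_lt_left.2 fun hle => hne (eq_of_le_of_finrank_eq hle h)

section

variable {E : Type*} [NormedAddCommGroup E] [InnerProductSpace ℂ E] [FiniteDimensional ℂ E]
  {k : ℕ} {V W L M N X Y Z Z' : Submodule ℂ E}

theorem Compatible.inf_sup_inf_orthogonal (h : Compatible V W) : W ⊓ V ⊔ W ⊓ Vᗮ = W := by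
  rw [← h.inf_orthogonal_inf, inf_comm W (W ⊓ V)ᗮ]
  exact sup_orthogonal_inf_of_hasOrthogonalProjection inf_le_left

theorem Compatible.finrank_inf_orthogonal_add (h : Compatible V W) :
    finrank ℂ ↥(W ⊓ Vᗮ) + finrank ℂ ↥(W ⊓ V) = finrank ℂ W := by
  rw [← h.inf_orthogonal_inf, inf_comm W, add_comm]
  exact finrank_add_inf_finrank_orthogonal inf_le_left

theorem Compatible.le_or_le_orthogonal (h : Compatible V M) (hM1 : finrank ℂ M = 1) :
    M ≤ V ∨ M ≤ Vᗮ := by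
  have := h.finrank_inf_orthogonal_add
  obtain h1 | h1 : finrank ℂ ↥(M ⊓ V) = finrank ℂ M ∨ finrank ℂ ↥(M ⊓ Vᗮ) = finrank ℂ M := by
    omega
  · exact Or.inl (inf_eq_left.1 (eq_of_le_of_finrank_eq inf_le_left h1))
  · exact Or.inr (inf_eq_left.1 (eq_of_le_of_finrank_eq inf_le_left h1))

theorem finrank_sup_of_le_orthogonal (h : M ≤ Lᗮ) :
    finrank ℂ ↥(L ⊔ M) = finrank ℂ L + finrank ℂ M := by
  have := finrank_sup_add_finrank_inf_eq L M
  rwa [disjoint_iff.1 ((orthogonal_disjoint L).mono_right h), finrank_bot, add_zero] at this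

theorem isDim_sup_of_le_orthogonal (hk : 1 ≤ k) (hL : finrank ℂ L = k - 1) (hM : M ≤ Lᗮ)
    (hM1 : finrank ℂ M = 1) : IsDim k (L ⊔ M) :=
  ⟨inferInstance, by rw [finrank_sup_of_le_orthogonal hM, hL, hM1]; omega⟩

theorem orthoAdjacent_sup_of_le_of_le_orthogonal (hL : L ≤ V) (hM : M ≤ Vᗮ)
    (hLk : finrank ℂ L = k - 1) (hM1 : finrank ℂ M = 1) : OrthoAdjacent k (L ⊔ M) V := by
  have hinf : (L ⊔ M) ⊓ V = L := sup_inf_eq_of_le_of_le_orthogonal hL hM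
  refine ⟨⟨fun h => ?_, by rw [hinf, hLk]⟩, (compatible_sup_of_le_of_le_orthogonal hL hM).symm⟩
  have := finrank_mono (le_inf (h ▸ le_sup_right) hM : M ≤ V ⊓ Vᗮ)
  rw [inf_orthogonal_eq_bot, finrank_bot] at this
  omega

theorem OrthoAdjacent.finrank_inf_orthogonal (h : OrthoAdjacent k W V) (hk : 1 ≤ k)
    (hW : finrank ℂ W = k) : finrank ℂ ↥(W ⊓ Vᗮ) = 1 := by
  have := h.2.symm.finrank_inf_orthogonal_add
  rw [h.1.2, hW] at this
  omega

theorem OrthoAdjacent.orthogonal_inf_le (h : OrthoAdjacent k W V) (hLW : L ≤ W) (hLV : L ≤ V)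
    (hL : finrank ℂ L = k - 1) : Lᗮ ⊓ W ≤ Vᗮ := by
  rw [eq_of_le_of_finrank_eq (le_inf hLW hLV) (hL.trans h.1.2.symm), inf_comm,
    h.2.symm.inf_orthogonal_inf]
  exact inf_le_right

theorem AdjacentSub.inf_eq_orthogonal_inf (h : AdjacentSub k W V) (hW : finrank ℂ W = k)
    (hMW : M ≤ W) (hMV : M ≤ Vᗮ) (hM1 : finrank ℂ M = 1) : W ⊓ V = Mᗮ ⊓ W := by
  refine eq_of_le_of_finrank_eq (le_inf (inf_le_right.trans (IsOrtho.ge hMV)) inf_le_left) ?_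
  have := finrank_add_inf_finrank_orthogonal hMW
  rw [h.2]
  omega

theorem AdjacentSub.inf_le_inf_of_le_orthogonal_sup (hX : AdjacentSub k Z X)
    (hY : AdjacentSub k Z Y) (hZ : finrank ℂ Z = k) (hMZ : M ≤ Z) (hM : M ≤ (X ⊔ Y)ᗮ)
    (hM1 : finrank ℂ M = 1) : Z ⊓ X ≤ X ⊓ Y := by
  rw [← inf_orthogonal] at hM
  have hXY : Z ⊓ X = Z ⊓ Y := (hX.inf_eq_orthogonal_inf hZ hMZ (hM.trans inf_le_left) hM1).trans
    (hY.inf_eq_orthogonal_inf hZ hMZ (hM.trans inf_le_right) hM1).symm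
  exact le_inf inf_le_right (hXY.le.trans inf_le_right)

theorem AdjacentSub.sub_two_le_finrank_inf (hX : AdjacentSub k Z X) (hY : AdjacentSub k Z Y)
    (hZ : finrank ℂ Z = k) : k - 2 ≤ finrank ℂ ↥(Z ⊓ (X ⊓ Y)) := by
  have h1 := finrank_sup_add_finrank_inf_eq (Z ⊓ X) (Z ⊓ Y)
  have h2 := finrank_mono (sup_le inf_le_left inf_le_left : Z ⊓ X ⊔ Z ⊓ Y ≤ Z)
  rw [← inf_inf_distrib_left, hX.2, hY.2] at h1
  omega

end

theorem sup_eq_of_finrank_eq_two {K V : Type*} [DivisionRing K] [AddCommGroup V] [Module K V]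
    {P Q W : Submodule K V} [FiniteDimensional K W] (hP : finrank K P = 1) (hQ : finrank K Q = 1)
    (hne : P ≠ Q) (hPW : P ≤ W) (hQW : Q ≤ W) (hW : finrank K W = 2) : P ⊔ Q = W := by
  have : FiniteDimensional K P := Module.finite_of_finrank_eq_succ hP
  have : FiniteDimensional K Q := Module.finite_of_finrank_eq_succ hQ
  have h1 := finrank_sup_add_finrank_inf_eq P Q
  have h2 := finrank_inf_lt_of_ne (hP.trans hQ.symm) hne
  exact eq_of_le_of_finrank_eq (sup_le hPW hQW) (by omega)

theorem infinite_setOf_finrank_eq_one_le {K V : Type*} [Field K] [Infinite K] [AddCommGroup V]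
    [Module K V] {W : Submodule K V} (hW : 1 < finrank K W) :
    {N : Submodule K V | N ≤ W ∧ finrank K N = 1}.Infinite := by
  have : Nontrivial W := nontrivial_of_finrank_pos (zero_lt_one.trans hW)
  obtain ⟨x, hx⟩ := exists_ne (0 : W)
  obtain ⟨y, hxy⟩ := exists_linearIndependent_pair_of_one_lt_finrank hW hx
  have hxy : LinearIndependent K ![(x : V), y] := by
    have hcomp : W.subtype ∘ ![x, y] = ![(x : V), y] := by
      ext i
      fin_cases i <;> rfl
    exact hcomp ▸ hxy.map' W.subtype W.ker_subtype
  refine Set.infinite_of_injective_forall_mem (f := fun t : K => K ∙ ((x : V) + t • y))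
    (fun s t hst => ?_) fun t => ⟨span_singleton_le_iff_mem _ _ |>.2 ?_, finrank_span_singleton ?_⟩
  · obtain ⟨c, hc⟩ := span_singleton_eq_span_singleton.1 hst
    have h := LinearIndependent.pair_iff.1 hxy ((c : K) - 1) ((c : K) * s - t) (by
      rw [← sub_eq_zero.2 hc, Units.smul_def]
      module)
    linear_combination h.2 - s * h.1
  · exact W.add_mem x.2 (W.smul_mem t y.2)
  · intro h
    simpa using (LinearIndependent.pair_iff.1 hxy 1 t (by rw [one_smul, h])).1

section Neighbours

variable {E : Type*} [NormedAddCommGroup E] [InnerProductSpace ℂ E] [FiniteDimensional ℂ E]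
  {k : ℕ} {M N X Y Z Z' : Submodule ℂ E}

theorem le_of_orthoAdjacent_inf_sup (hk : 1 ≤ k) (hL : finrank ℂ ↥(X ⊓ Y) = k - 1)
    (hN : N ≤ (X ⊔ Y)ᗮ) (hN1 : finrank ℂ N = 1) (hZ' : finrank ℂ Z' = k)
    (hX : OrthoAdjacent k Z' X) (hY : OrthoAdjacent k Z' Y) (hZ : OrthoAdjacent k Z' (X ⊓ Y ⊔ N)) :
    X ⊓ Y ≤ Z' := by
  have hNL : N ≤ (X ⊓ Y)ᗮ := hN.trans (orthogonal_le (inf_le_left.trans le_sup_left))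
  have hZN : (X ⊓ Y ⊔ N) ⊓ (X ⊓ Y)ᗮ = N := by
    rw [sup_comm]
    exact sup_inf_eq_of_le_of_le_orthogonal hNL (le_orthogonal_orthogonal _)
  have hcomp : Compatible Z' N := hZN ▸ hZ.2.inf (hX.2.inf hY.2).orthogonal_right
  rcases hcomp.le_or_le_orthogonal hN1 with hNZ' | hNZ'
  · rw [← eq_of_le_of_finrank_eq (hX.1.inf_le_inf_of_le_orthogonal_sup hY.1 hZ' hNZ' hN hN1)
      (hX.1.2.trans hL.symm)]
    exact inf_le_left
  · have hZk := (isDim_sup_of_le_orthogonal hk hL hNL hN1).2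
    have h := hZ.1.symm.inf_eq_orthogonal_inf hZk le_sup_right hNZ' hN1
    rw [inf_comm Nᗮ, sup_inf_eq_of_le_of_le_orthogonal (IsOrtho.ge hNL)
      (le_orthogonal_orthogonal _)] at h
    exact h.ge.trans inf_le_right

theorem eq_of_orthoAdjacent_inf_sup (hk : 1 ≤ k) (hL : finrank ℂ ↥(X ⊓ Y) = k - 1)
    (hS : finrank ℂ ↥(X ⊔ Y)ᗮ = 2) (hN : N ≤ (X ⊔ Y)ᗮ) (hN1 : finrank ℂ N = 1)
    (hZ' : finrank ℂ Z' = k) (hX : OrthoAdjacent k Z' X) (hY : OrthoAdjacent k Z' Y)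
    (hZ : OrthoAdjacent k Z' (X ⊓ Y ⊔ N)) : Z' = X ⊓ Y ⊔ Nᗮ ⊓ (X ⊔ Y)ᗮ := by
  have hLZ' := le_of_orthoAdjacent_inf_sup hk hL hN hN1 hZ' hX hY hZ
  have hG : (X ⊓ Y)ᗮ ⊓ Z' ≤ Nᗮ ⊓ (X ⊔ Y)ᗮ := by
    refine le_inf ((hZ.orthogonal_inf_le hLZ' le_sup_left hL).trans
      (orthogonal_le le_sup_right)) ?_
    rw [← inf_orthogonal]
    exact le_inf (hX.orthogonal_inf_le hLZ' inf_le_left hL)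
      (hY.orthogonal_inf_le hLZ' inf_le_right hL)
  have h1 := finrank_add_inf_finrank_orthogonal hLZ'
  have h2 := finrank_add_inf_finrank_orthogonal hN
  rw [← eq_of_le_of_finrank_eq hG (by omega)]
  exact (sup_orthogonal_inf_of_hasOrthogonalProjection hLZ').symm

theorem AdjacentSub.infinite_setOf_existsUnique (hk : 1 ≤ k) (hXY : AdjacentSub k X Y)
    (hS : finrank ℂ ↥(X ⊔ Y)ᗮ = 2) :
    {Z : Submodule ℂ E | IsDim k Z ∧ OrthoAdjacent k Z X ∧ OrthoAdjacent k Z Y ∧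
      (∃! Z' : Submodule ℂ E, IsDim k Z' ∧ OrthoAdjacent k Z' X ∧ OrthoAdjacent k Z' Y ∧
        OrthoAdjacent k Z' Z)}.Infinite := by
  have hL : finrank ℂ ↥(X ⊓ Y) = k - 1 := hXY.2
  have hLS : X ⊓ Y ≤ (X ⊔ Y)ᗮᗮ := inf_le_sup.trans (le_orthogonal_orthogonal _)
  have hSL : (X ⊔ Y)ᗮ ≤ (X ⊓ Y)ᗮ := orthogonal_le inf_le_sup
  have hSX : (X ⊔ Y)ᗮ ≤ Xᗮ := orthogonal_le le_sup_left
  have hSY : (X ⊔ Y)ᗮ ≤ Yᗮ := orthogonal_le le_sup_right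
  have hinj : Set.InjOn (X ⊓ Y ⊔ ·) {N | N ≤ (X ⊔ Y)ᗮ ∧ finrank ℂ N = 1} := by
    intro N hN N' hN' h
    have key : ∀ N ≤ (X ⊔ Y)ᗮ, (X ⊓ Y ⊔ N) ⊓ (X ⊔ Y)ᗮ = N := fun N hN => by
      rw [sup_comm]
      exact sup_inf_eq_of_le_of_le_orthogonal hN hLS
    rw [← key N hN.1, ← key N' hN'.1]
    exact congr($h ⊓ (X ⊔ Y)ᗮ)
  refine ((infinite_setOf_finrank_eq_one_le (hS ▸ one_lt_two)).image hinj).mono ?_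
  rintro _ ⟨N, ⟨hN, hN1⟩, rfl⟩
  have hN' : Nᗮ ⊓ (X ⊔ Y)ᗮ ≤ (X ⊔ Y)ᗮ := inf_le_right
  have hN'1 : finrank ℂ ↥(Nᗮ ⊓ (X ⊔ Y)ᗮ) = 1 := by
    have := finrank_add_inf_finrank_orthogonal hN
    omega
  have hN'Z : Nᗮ ⊓ (X ⊔ Y)ᗮ ≤ (X ⊓ Y ⊔ N)ᗮ := by
    rw [← inf_orthogonal (X ⊓ Y) N]
    exact le_inf (hN'.trans hSL) inf_le_left
  refine ⟨isDim_sup_of_le_orthogonal hk hL (hN.trans hSL) hN1,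
    orthoAdjacent_sup_of_le_of_le_orthogonal inf_le_left (hN.trans hSX) hL hN1,
    orthoAdjacent_sup_of_le_of_le_orthogonal inf_le_right (hN.trans hSY) hL hN1,
    X ⊓ Y ⊔ Nᗮ ⊓ (X ⊔ Y)ᗮ, ⟨isDim_sup_of_le_orthogonal hk hL (hN'.trans hSL) hN'1,
      orthoAdjacent_sup_of_le_of_le_orthogonal inf_le_left (hN'.trans hSX) hL hN'1,
      orthoAdjacent_sup_of_le_of_le_orthogonal inf_le_right (hN'.trans hSY) hL hN'1,
      orthoAdjacent_sup_of_le_of_le_orthogonal le_sup_left hN'Z hL hN'1⟩, ?_⟩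
  rintro Z' ⟨hZ', hZ'X, hZ'Y, hZ'Z⟩
  exact eq_of_orthoAdjacent_inf_sup hk hL hS hN hN1 hZ'.2 hZ'X hZ'Y hZ'Z

theorem finrank_inf_eq_sub_two (hX : finrank ℂ X = k) (hY : finrank ℂ Y = k)
    (hXY : ¬ AdjacentSub k X Y) (hne : X ≠ Y) (hZ : finrank ℂ Z = k) (hZX : AdjacentSub k Z X)
    (hZY : AdjacentSub k Z Y) : finrank ℂ ↥(X ⊓ Y) = k - 2 := by
  have h1 := hZX.sub_two_le_finrank_inf hZY hZ
  have h2 := finrank_mono (inf_le_right : Z ⊓ (X ⊓ Y) ≤ X ⊓ Y)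
  have h3 := finrank_inf_lt_of_ne (hX.trans hY.symm) hne
  have h4 : finrank ℂ ↥(X ⊓ Y) ≠ k - 1 := fun h => hXY ⟨hne, h⟩
  rw [hX] at h3
  omega

theorem AdjacentSub.inf_le_of_finrank_le (hX : AdjacentSub k Z X) (hY : AdjacentSub k Z Y)
    (hZ : finrank ℂ Z = k) (hXY : finrank ℂ ↥(X ⊓ Y) ≤ k - 2) : X ⊓ Y ≤ Z :=
  inf_eq_right.1 <| eq_of_le_of_finrank_le inf_le_right
    (hXY.trans (hX.sub_two_le_finrank_inf hY hZ))

theorem not_le_orthogonal_sup_of_finrank_inf (hk : 2 ≤ k) (hXY : finrank ℂ ↥(X ⊓ Y) = k - 2)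
    (hZ : finrank ℂ Z = k) (hZX : AdjacentSub k Z X) (hZY : AdjacentSub k Z Y) (hMZ : M ≤ Z)
    (hM1 : finrank ℂ M = 1) : ¬ M ≤ (X ⊔ Y)ᗮ := fun hM => by
  have := finrank_mono (hZX.inf_le_inf_of_le_orthogonal_sup hZY hZ hMZ hM hM1)
  rw [hZX.2, hXY] at this
  omega

theorem inf_orthogonal_le_of_compatible_inf (hk : 2 ≤ k) (hXY : finrank ℂ ↥(X ⊓ Y) = k - 2)
    (hZ : finrank ℂ Z = k) (hZX : OrthoAdjacent k Z X) (hZY : OrthoAdjacent k Z Y)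
    (hA : Compatible Y (Z ⊓ X)) : Z ⊓ Xᗮ ≤ Y := by
  have hu : Compatible Y (Z ⊓ Xᗮ) :=
    hZX.2.symm.inf_orthogonal_inf ▸ hZY.2.symm.inf hA.orthogonal_right
  have hu1 := hZX.finrank_inf_orthogonal (by omega) hZ
  refine (hu.le_or_le_orthogonal hu1).resolve_right fun huY => ?_
  refine not_le_orthogonal_sup_of_finrank_inf hk hXY hZ hZX.1 hZY.1 inf_le_left hu1 ?_
  rw [← inf_orthogonal]
  exact le_inf inf_le_right huY

theorem exists_orthoAdjacent_inf_ne (hk : 2 ≤ k) (hX : finrank ℂ X = k) (hZ : finrank ℂ Z = k)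
    (hXY : finrank ℂ ↥(X ⊓ Y) = k - 2) (hZX : OrthoAdjacent k Z X) (hLZ : X ⊓ Y ≤ Z)
    (hu : Z ⊓ Xᗮ ≤ Y) (hYX : (X ⊓ Y)ᗮ ⊓ Y ≤ Xᗮ) :
    ∃ Z'', (IsDim k Z'' ∧ OrthoAdjacent k Z'' X ∧ OrthoAdjacent k Z'' Y ∧
      OrthoAdjacent k Z'' Z) ∧ Z'' ⊓ X ≠ Z ⊓ X := by
  have hu1 := hZX.finrank_inf_orthogonal (by omega) hZ
  have huL : Z ⊓ Xᗮ ≤ (X ⊓ Y)ᗮ := inf_le_right.trans (orthogonal_le inf_le_left)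
  have ha1 : finrank ℂ ↥((Z ⊓ X)ᗮ ⊓ X) = 1 := by
    have := finrank_add_inf_finrank_orthogonal (inf_le_right : Z ⊓ X ≤ X)
    rw [hZX.1.2] at this
    omega
  have haL : (Z ⊓ X)ᗮ ⊓ X ≤ (X ⊓ Y)ᗮ := inf_le_left.trans (orthogonal_le (le_inf hLZ inf_le_left))
  have haY : (Z ⊓ X)ᗮ ⊓ X ≤ Yᗮ := by
    rw [← sup_orthogonal_inf_of_hasOrthogonalProjection (inf_le_right : X ⊓ Y ≤ Y),
      ← inf_orthogonal]
    exact le_inf haL (inf_le_right.trans (IsOrtho.ge hYX))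
  have haZ : (Z ⊓ X)ᗮ ⊓ X ≤ Zᗮ := by
    refine le_trans ?_ (orthogonal_le hZX.2.symm.inf_sup_inf_orthogonal.ge)
    rw [← inf_orthogonal]
    exact le_inf inf_le_left (inf_le_right.trans (IsOrtho.ge inf_le_right))
  have hLu : finrank ℂ ↥(X ⊓ Y ⊔ Z ⊓ Xᗮ) = k - 1 := by
    rw [finrank_sup_of_le_orthogonal huL, hXY, hu1]
    omega
  have hLa : finrank ℂ ↥(X ⊓ Y ⊔ (Z ⊓ X)ᗮ ⊓ X) = k - 1 := by
    rw [finrank_sup_of_le_orthogonal haL, hXY, ha1]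
    omega
  have hZ''X := orthoAdjacent_sup_of_le_of_le_orthogonal (sup_le inf_le_left inf_le_right)
    (inf_le_right : Z ⊓ Xᗮ ≤ Xᗮ) hLa hu1
  rw [sup_right_comm] at hZ''X
  refine ⟨X ⊓ Y ⊔ Z ⊓ Xᗮ ⊔ (Z ⊓ X)ᗮ ⊓ X, ⟨isDim_sup_of_le_orthogonal (by omega) hLu
    (haY.trans (orthogonal_le (sup_le inf_le_right hu))) ha1, hZ''X,
    orthoAdjacent_sup_of_le_of_le_orthogonal (sup_le inf_le_right hu) haY hLu ha1,
    orthoAdjacent_sup_of_le_of_le_orthogonal (sup_le hLZ inf_le_left) haZ hLu ha1⟩, fun h => ?_⟩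
  have ha : (Z ⊓ X)ᗮ ⊓ X ≤ Z ⊓ X := (le_inf le_sup_right inf_le_right).trans h.le
  have := finrank_mono (le_inf ha inf_le_left : _ ≤ Z ⊓ X ⊓ (Z ⊓ X)ᗮ)
  rw [inf_orthogonal_eq_bot, finrank_bot, ha1] at this
  omega

theorem exists_orthoAdjacent_ne_of_inf_eq (hk : 2 ≤ k) (hX : finrank ℂ X = k)
    (hY : finrank ℂ Y = k) (hZ : finrank ℂ Z = k) (hZ' : finrank ℂ Z' = k)
    (hXY : finrank ℂ ↥(X ⊓ Y) = k - 2) (hZX : OrthoAdjacent k Z X) (hZY : OrthoAdjacent k Z Y)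
    (hZ'X : OrthoAdjacent k Z' X) (hZ'Y : OrthoAdjacent k Z' Y) (hZ'Z : OrthoAdjacent k Z' Z)
    (hA : Z ⊓ X = Z' ⊓ X) :
    ∃ Z'', (IsDim k Z'' ∧ OrthoAdjacent k Z'' X ∧ OrthoAdjacent k Z'' Y ∧
      OrthoAdjacent k Z'' Z) ∧ Z'' ≠ Z' := by
  have hAY : Compatible Y (Z ⊓ X) := by
    rw [eq_of_le_of_finrank_eq (le_inf (hA ▸ inf_le_left) inf_le_left : Z ⊓ X ≤ Z' ⊓ Z)
      (hZX.1.2.trans hZ'Z.1.2.symm)]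
    exact hZ'Y.2.symm.inf hZY.2.symm
  have hu := inf_orthogonal_le_of_compatible_inf hk hXY hZ hZX hZY hAY
  have hu' := inf_orthogonal_le_of_compatible_inf hk hXY hZ' hZ'X hZ'Y (by rwa [← hA])
  have huu' : Z ⊓ Xᗮ ≠ Z' ⊓ Xᗮ := fun h => hZ'Z.1.1 <| by
    rw [← hZ'X.2.symm.inf_sup_inf_orthogonal, ← hZX.2.symm.inf_sup_inf_orthogonal, hA, h]
  -- the part of `Y` orthogonal to `X ⊓ Y` is spanned by the lines `Z ⊓ Xᗮ` and `Z' ⊓ Xᗮ`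
  have hYX : (X ⊓ Y)ᗮ ⊓ Y ≤ Xᗮ := by
    have hYk := finrank_add_inf_finrank_orthogonal (inf_le_right : X ⊓ Y ≤ Y)
    have hXL : Xᗮ ≤ (X ⊓ Y)ᗮ := orthogonal_le inf_le_left
    rw [← sup_eq_of_finrank_eq_two (hZX.finrank_inf_orthogonal (by omega) hZ)
      (hZ'X.finrank_inf_orthogonal (by omega) hZ') huu' (le_inf (inf_le_right.trans hXL) hu)
      (le_inf (inf_le_right.trans hXL) hu') (by omega)]
    exact sup_le inf_le_right inf_le_right
  obtain ⟨Z'', hZ'', hne⟩ := exists_orthoAdjacent_inf_ne hk hX hZ hXY hZX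
    (hZX.1.inf_le_of_finrank_le hZY.1 hZ hXY.le) hu hYX
  exact ⟨Z'', hZ'', fun h => hne (h ▸ hA.symm)⟩

theorem exists_orthoAdjacent_ne (hk : 2 ≤ k) (hX : finrank ℂ X = k) (hY : finrank ℂ Y = k)
    (hZ : finrank ℂ Z = k) (hZ' : finrank ℂ Z' = k) (hXY : finrank ℂ ↥(X ⊓ Y) = k - 2)
    (hZX : OrthoAdjacent k Z X) (hZY : OrthoAdjacent k Z Y) (hZ'X : OrthoAdjacent k Z' X)
    (hZ'Y : OrthoAdjacent k Z' Y) (hZ'Z : OrthoAdjacent k Z' Z) :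
    ∃ Z'', (IsDim k Z'' ∧ OrthoAdjacent k Z'' X ∧ OrthoAdjacent k Z'' Y ∧
      OrthoAdjacent k Z'' Z) ∧ Z'' ≠ Z' := by
  have hC : ∀ {V : Submodule ℂ E}, X ⊓ Y ≤ V → OrthoAdjacent k Z V → OrthoAdjacent k Z' V →
      Z ⊓ V ≠ Z' ⊓ V → Z' ⊓ Z ⊓ V = X ⊓ Y := fun {V} hV hZV hZ'V hne => by
    have hle : X ⊓ Y ≤ Z' ⊓ Z ⊓ V := le_inf (le_inf (hZ'X.1.inf_le_of_finrank_le hZ'Y.1 hZ' hXY.le)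
      (hZX.1.inf_le_of_finrank_le hZY.1 hZ hXY.le)) hV
    refine (eq_of_le_of_finrank_le hle ?_).symm
    have := finrank_inf_lt_of_ne (hZ'V.1.2.trans hZV.1.2.symm) (Ne.symm hne)
    rw [← inf_inf_distrib_right, hZ'V.1.2] at this
    omega
  obtain hA | hB : Z ⊓ X = Z' ⊓ X ∨ Z ⊓ Y = Z' ⊓ Y := by
    by_contra! h
    have hCX : Compatible X (Z' ⊓ Z) := hZ'X.2.symm.inf hZX.2.symm
    have hCY : Compatible Y (Z' ⊓ Z) := hZ'Y.2.symm.inf hZY.2.symm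
    have hCX' := hC inf_le_left hZX hZ'X h.1
    have hCY' := hC inf_le_right hZY hZ'Y h.2
    -- the orthogonal complement of `X ⊓ Y` in `Z' ⊓ Z` is orthogonal to both `X` and `Y`
    have hM1 : finrank ℂ ↥(Z' ⊓ Z ⊓ Xᗮ) = 1 := by
      have := hCX.finrank_inf_orthogonal_add
      rw [hCX', hZ'Z.1.2, hXY] at this
      omega
    have hMY : Z' ⊓ Z ⊓ Xᗮ ≤ Yᗮ := by
      rw [← hCX.inf_orthogonal_inf, hCX', ← hCY', hCY.inf_orthogonal_inf]
      exact inf_le_right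
    refine not_le_orthogonal_sup_of_finrank_inf hk hXY hZ hZX.1 hZY.1
      (inf_le_left.trans inf_le_right) hM1 ?_
    rw [← inf_orthogonal]
    exact le_inf inf_le_right hMY
  · exact exists_orthoAdjacent_ne_of_inf_eq hk hX hY hZ hZ' hXY hZX hZY hZ'X hZ'Y hZ'Z hA
  · obtain ⟨Z'', ⟨hZ'', hZ''Y, hZ''X, hZ''Z⟩, hne⟩ := exists_orthoAdjacent_ne_of_inf_eq hk hY hX hZ
      hZ' (by rwa [inf_comm]) hZY hZX hZ'Y hZ'X hZ'Z hB
    exact ⟨Z'', ⟨hZ'', hZ''X, hZ''Y, hZ''Z⟩, hne⟩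

end Neighbours

theorem adjacent_noncompatible_iff_infinite_unique_general
    [FiniteDimensional ℂ H] (k : ℕ) (hk : 2 ≤ k)
    (hk3 : k = Module.finrank ℂ H - 3)
    (X Y : Submodule ℂ H) (hX : IsDim k X) (hY : IsDim k Y)
    (hdist : (orthoGrassmannGraph H k).dist ⟨X, hX⟩ ⟨Y, hY⟩ = 2) :
    (AdjacentSub k X Y ∧ ¬ Compatible X Y) ↔
      {Z : Submodule ℂ H | IsDim k Z ∧ OrthoAdjacent k Z X ∧ OrthoAdjacent k Z Y ∧
        (∃! Z' : Submodule ℂ H, IsDim k Z' ∧ OrthoAdjacent k Z' X ∧ OrthoAdjacent k Z' Y ∧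
          OrthoAdjacent k Z' Z)}.Infinite := by
  have hne : X ≠ Y := by
    rintro rfl
    rw [SimpleGraph.dist_self] at hdist
    omega
  have hXY : ¬ OrthoAdjacent k X Y := fun h => by
    rw [SimpleGraph.dist_eq_one_iff_adj.2 h] at hdist
    omega
  constructor
  · rintro ⟨hadj, -⟩
    refine hadj.infinite_setOf_existsUnique (by omega) ?_
    have h1 := finrank_sup_add_finrank_inf_eq X Y
    have h2 := finrank_add_finrank_orthogonal (X ⊔ Y)
    rw [hadj.2, hX.2, hY.2] at h1
    omega
  · intro hinf
    by_contra hcon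
    obtain ⟨Z, hZ, hZX, hZY, Z', ⟨hZ', hZ'X, hZ'Y, hZ'Z⟩, huniq⟩ := hinf.nonempty
    have hXY2 := finrank_inf_eq_sub_two hX.2 hY.2 (fun h => hcon ⟨h, fun hc => hXY ⟨h, hc⟩⟩)
      hne hZ.2 hZX.1 hZY.1
    obtain ⟨Z'', hZ'', hne''⟩ :=
      exists_orthoAdjacent_ne hk hX.2 hY.2 hZ.2 hZ'.2 hXY2 hZX hZY hZ'X hZ'Y hZ'Z
    exact hne'' (huniq Z'' hZ'')

/-- Suppose `H` is finite-dimensional, `4 ≤ 2k ≤ dim H`, `k = dim H - 3`, and let `X, Y` be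
`k`-dimensional subspaces of `H` at distance `2` in `Γ⊥_k(H)`. Then `X, Y` are adjacent and
non-compatible if and only if there are infinitely many `k`-dimensional subspaces `Z`
ortho-adjacent to both `X, Y` and such that there is precisely one `k`-dimensional subspace
`Z'` ortho-adjacent to each of `X, Y, Z`. -/
theorem adjacent_noncompatible_iff_infinite_unique
    [FiniteDimensional ℂ H] (k : ℕ) (hk : 2 ≤ k) (h2k : 2 * k ≤ Module.finrank ℂ H)
    (hk3 : k = Module.finrank ℂ H - 3)
    (X Y : Submodule ℂ H) (hX : IsDim k X) (hY : IsDim k Y)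
    (hdist : (orthoGrassmannGraph H k).dist ⟨X, hX⟩ ⟨Y, hY⟩ = 2) :
    (AdjacentSub k X Y ∧ ¬ Compatible X Y) ↔
      {Z : Submodule ℂ H | IsDim k Z ∧ OrthoAdjacent k Z X ∧ OrthoAdjacent k Z Y ∧
        (∃! Z' : Submodule ℂ H, IsDim k Z' ∧ OrthoAdjacent k Z' X ∧ OrthoAdjacent k Z' Y ∧
          OrthoAdjacent k Z' Z)}.Infinite :=
  adjacent_noncompatible_iff_infinite_unique_general k hk hk3 X Y hX hY hdist

end
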